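/- Specializing the Left-End Chain Rule: under the hypotheses of the Left-End Chain Rule, if x ∉ {a, b}, then ⟦∂((B::K₂)[y])/∂x⟧_{ρ⟨K₁⟩} = ⟦∂(K₂[y])/∂x⟧_{ρ⟨K₁;B⟩}; i.e., the partial derivative with respect to a variable not occurring as an operand of the processed binding is unchanged. -/

import Mathlib

/-!
Filling `B :: K₂` is filling `K₂` and then substituting `[B][z]` for each leaf `z`, and evaluating
after that substitution at `ρ⟨K₁⟩` is evaluating at `ρ⟨K₁;B⟩`. Since `x ∉ {u, a, b}`, the
derivative of `[B][z]` with respect to `x` is `1` at `z = x` and `0` elsewhere, so the chain rule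
for the substitution collapses to the derivative of `K₂[y]` itself.
-/

inductive Exp (I : Type) : Type
  | zero : Exp I
  | one  : Exp I
  | leaf : I → Exp I
  | add  : Exp I → Exp I → Exp I
  | mul  : Exp I → Exp I → Exp I

def Exp.eval {I R : Type} [CommSemiring R] (ρ : I → R) : Exp I → R
  | .zero => 0
  | .one => 1
  | .leaf i => ρ i
  | .add e₁ e₂ => e₁.eval ρ + e₂.eval ρ
  | .mul e₁ e₂ => e₁.eval ρ * e₂.eval ρ

inductive Op : Type
  | add
  | mul

def Op.node {V : Type} : Op → Exp V → Exp V → Exp V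
  | .add, e₁, e₂ => .add e₁ e₂
  | .mul, e₁, e₂ => .mul e₁ e₂

/-- A binding `u := a op b`. -/
structure Binding (V : Type) where
  u : V
  op : Op
  a : V
  b : V

/-- A context is a list of bindings; the left end is the earliest binding. -/
abbrev Ctx (V : Type) := List (Binding V)

def Ctx.defs {V : Type} (K : Ctx V) : List V := List.map Binding.u K

/-- Filling, processing bindings from the newest (head of the reversed list). -/
def fillAux {V : Type} [DecidableEq V] : List (Binding V) → V → Exp V
  | [], y => .leaf y
  | B :: K, y =>
      if B.u = y then B.op.node (fillAux K B.a) (fillAux K B.b) else fillAux K y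

/-- Filling a context with an identifier, processing bindings from the right end. -/
def Ctx.fill {V : Type} [DecidableEq V] (K : Ctx V) (y : V) : Exp V :=
  fillAux (List.reverse K) y

/-- Extension of an environment by a context: `ρ⟨K⟩(y) = ⟦K[y]⟧_ρ`. -/
def extendEnv {V R : Type} [DecidableEq V] [CommSemiring R] (ρ : V → R) (K : Ctx V) : V → R :=
  fun y => Exp.eval ρ (Ctx.fill K y)

def Exp.deriv {I : Type} [DecidableEq I] (j : I) : Exp I → Exp I
  | .leaf i => if i = j then .one else .zero
  | .zero => .zero
  | .one => .zero
  | .add e₁ e₂ => .add (e₁.deriv j) (e₂.deriv j)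
  | .mul e₁ e₂ => .add (.mul (e₁.deriv j) e₂) (.mul e₁ (e₂.deriv j))

def Exp.subst {V : Type} (σ : V → Exp V) : Exp V → Exp V
  | .zero => .zero
  | .one => .one
  | .leaf i => σ i
  | .add e₁ e₂ => .add (e₁.subst σ) (e₂.subst σ)
  | .mul e₁ e₂ => .mul (e₁.subst σ) (e₂.subst σ)

theorem Exp.subst_node {V : Type} (σ : V → Exp V) (op : Op) (e₁ e₂ : Exp V) :
    (op.node e₁ e₂).subst σ = op.node (e₁.subst σ) (e₂.subst σ) := by
  cases op <;> rfl

theorem Exp.eval_subst {V R : Type} [CommSemiring R] (ρ : V → R) (σ : V → Exp V) (e : Exp V) :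
    (e.subst σ).eval ρ = e.eval fun z => (σ z).eval ρ := by
  induction e <;> simp [Exp.subst, Exp.eval, *]

theorem Exp.eval_deriv_subst {V R : Type} [DecidableEq V] [CommSemiring R]
    (ρ : V → R) (σ : V → Exp V) {x : V}
    (hσ : ∀ z, ((σ z).deriv x).eval ρ = if z = x then 1 else 0) (e : Exp V) :
    ((e.subst σ).deriv x).eval ρ = (e.deriv x).eval fun z => (σ z).eval ρ := by
  induction e with
  | zero | one => rfl
  | leaf i =>
    simp only [Exp.subst, Exp.deriv, hσ i]
    split <;> rfl
  | add e₁ e₂ ih₁ ih₂ => simp [Exp.subst, Exp.deriv, Exp.eval, ih₁, ih₂]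
  | mul e₁ e₂ ih₁ ih₂ => simp [Exp.subst, Exp.deriv, Exp.eval, ih₁, ih₂, Exp.eval_subst]

section Filling

variable {V : Type} [DecidableEq V]

theorem fillAux_append (L M : List (Binding V)) (y : V) :
    fillAux (L ++ M) y = (fillAux L y).subst (fillAux M) := by
  induction L generalizing y with
  | nil => rfl
  | cons B L ih =>
    simp only [List.cons_append, fillAux]
    split <;> simp [ih, Exp.subst_node]

theorem Ctx.fill_append (K L : Ctx V) (y : V) :
    Ctx.fill (K ++ L) y = (Ctx.fill L y).subst (Ctx.fill K) := by
  simp only [Ctx.fill, List.reverse_append, fillAux_append]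
  rfl

theorem Ctx.fill_cons (B : Binding V) (K : Ctx V) (y : V) :
    Ctx.fill (B :: K) y = (Ctx.fill K y).subst (Ctx.fill [B]) :=
  Ctx.fill_append [B] K y

theorem extendEnv_append {R : Type} [CommSemiring R] (ρ : V → R) (K L : Ctx V) :
    extendEnv ρ (K ++ L) = extendEnv (extendEnv ρ K) L := by
  funext y
  exact (congrArg (Exp.eval ρ) (Ctx.fill_append K L y)).trans (Exp.eval_subst ρ _ _)

theorem eval_deriv_fill_singleton {R : Type} [CommSemiring R] (ρ : V → R) {B : Binding V}
    {x : V} (hu : x ≠ B.u) (ha : x ≠ B.a) (hb : x ≠ B.b) (z : V) :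
    ((Ctx.fill [B] z).deriv x).eval ρ = if z = x then 1 else 0 := by
  simp only [Ctx.fill, List.reverse_singleton, fillAux]
  split
  · subst z
    cases B.op <;> simp [Op.node, Exp.deriv, Exp.eval, ha.symm, hb.symm, hu.symm]
  · simp only [Exp.deriv]
    split <;> rfl

end Filling

theorem left_end_chain_rule_untouched_general {V R : Type} [DecidableEq V] [CommSemiring R]
    (a b u x y : V) (op : Op) (K₁ K₂ : Ctx V) (ρ : V → R)
    (hxu : x ≠ u) (hxa : x ≠ a) (hxb : x ≠ b) :
    Exp.eval (extendEnv ρ K₁)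
        (Exp.deriv x (Ctx.fill ((⟨u, op, a, b⟩ :: K₂ : List (Binding V)) : Ctx V) y))
      = Exp.eval (extendEnv ρ ((K₁ ++ [⟨u, op, a, b⟩] : List (Binding V)) : Ctx V))
          (Exp.deriv x (Ctx.fill K₂ y)) := by
  rw [Ctx.fill_cons, Exp.eval_deriv_subst _ _ (eval_deriv_fill_singleton _ hxu hxa hxb),
    extendEnv_append]
  rfl

/-- Left-End Chain Rule specialized to a variable `x ∉ {a, b}`. -/
theorem left_end_chain_rule_untouched {V R : Type} [DecidableEq V] [CommSemiring R]
    (a b u x y : V) (op : Op) (K₁ K₂ : Ctx V) (ρ : V → R)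
    (hxu : x ≠ u) (hxa : x ≠ a) (hxb : x ≠ b)
    (hu₁ : u ∉ Ctx.defs K₁) (hu₂ : u ∉ Ctx.defs K₂) :
    Exp.eval (extendEnv ρ K₁)
        (Exp.deriv x (Ctx.fill ((⟨u, op, a, b⟩ :: K₂ : List (Binding V)) : Ctx V) y))
      = Exp.eval (extendEnv ρ ((K₁ ++ [⟨u, op, a, b⟩] : List (Binding V)) : Ctx V))
          (Exp.deriv x (Ctx.fill K₂ y)) :=
  left_end_chain_rule_untouched_general a b u x y op K₁ K₂ ρ hxu hxa hxb
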